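/- Let D be a finite directed graph with vertex s and let D' be its reduced undirected graph. Then g(D', s) = 1 if (D,s) is a P-position of Directed Geography (i.e., g⃗(D,s) = 0), and g(D', s) ≥ 2 if (D,s) is an N-position of Directed Geography (i.e., g⃗(D,s) ≠ 0). In particular, g(D',s) = 1 if and only if g⃗(D,s) = 0. -/

import Mathlib

noncomputable def mex (s : Finset ℕ) : ℕ := sInf {n : ℕ | n ∉ s}

noncomputable def geo {V : Type} [DecidableEq V] (G : SimpleGraph V) [DecidableRel G.Adj]
    (A : Finset V) (s : V) : ℕ :=
  if h : s ∈ A then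
    mex (((A.erase s).filter (fun v => G.Adj s v)).image (fun v => geo G (A.erase s) v))
  else 0
termination_by A.card
decreasing_by
  simp_wf
  exact Finset.card_erase_lt_of_mem h

/-- Vertices of the reduced undirected graph `D'` of a directed graph `D` on `V`:
original vertices (`orig`), one pendant vertex per original vertex (`pend`), and for
each arc `e` the eight gadget vertices `a, a₀, b, c, c₀, d, d₀, f`, encoded as
`gad e 0, …, gad e 7` in that order. -/
abbrev RedV (V : Type) : Type := V ⊕ V ⊕ ((V × V) × Fin 8)

def orig {V : Type} (v : V) : RedV V := Sum.inl v
def pend {V : Type} (v : V) : RedV V := Sum.inr (Sum.inl v)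
def gad {V : Type} (e : V × V) (i : Fin 8) : RedV V := Sum.inr (Sum.inr (e, i))

/-- The internal edges of the gadget for one arc, with the names
`a = 0, a₀ = 1, b = 2, c = 3, c₀ = 4, d = 5, d₀ = 6, f = 7`:
`{a,a₀}, {a,b}, {b,c}, {c,c₀}, {b,f}, {c,d}, {d,d₀}, {f,d}`. -/
def gadgetPairs : List (Fin 8 × Fin 8) :=
  [(0,1), (0,2), (2,3), (3,4), (2,7), (3,5), (5,6), (7,5)]

/-- Base edge relation of the reduced graph `D'` of the digraph with arc set `A`:
each vertex `v` gets a pendant edge `{v, v₀}`, and each arc `(x,y) ∈ A` is replaced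
by its gadget, with edges `{x,a}` and `{d,y}` to the original vertices and the
internal gadget edges. -/
def redRel {V : Type} [DecidableEq V] (A : Finset (V × V)) : RedV V → RedV V → Prop
  | Sum.inl v, Sum.inr (Sum.inl w) => v = w
  | Sum.inl v, Sum.inr (Sum.inr (e, i)) =>
      e ∈ A ∧ ((v = e.1 ∧ i = 0) ∨ (v = e.2 ∧ i = 5))
  | Sum.inr (Sum.inr (e, i)), Sum.inr (Sum.inr (e', j)) =>
      e = e' ∧ e ∈ A ∧ (i, j) ∈ gadgetPairs
  | _, _ => False

instance {V : Type} [DecidableEq V] (A : Finset (V × V)) : DecidableRel (redRel A) :=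
  fun u w => by
    rcases u with v | v | ⟨e, i⟩ <;> rcases w with v' | v' | ⟨e', j⟩ <;>
      simp only [redRel] <;> infer_instance

/-- The reduced undirected graph `D'` of the digraph with vertex type `V` and
arc set `A`. -/
def reduced {V : Type} [DecidableEq V] (A : Finset (V × V)) : SimpleGraph (RedV V) where
  Adj u w := u ≠ w ∧ (redRel A u w ∨ redRel A w u)
  symm := ⟨fun u w h => ⟨h.1.symm, h.2.symm⟩⟩
  loopless := ⟨fun u h => h.1 rfl⟩

instance {V : Type} [DecidableEq V] (A : Finset (V × V)) : DecidableRel (reduced A).Adj :=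
  fun u w => inferInstanceAs (Decidable (u ≠ w ∧ (redRel A u w ∨ redRel A w u)))


/-- The Directed Geography Grundy value for the digraph with arc set `A`, played on the
set `B` of remaining vertices with the token on `s`:
`g⃗(B,s) = mex { g⃗(B − s, v) : (s,v) ∈ A, v ∈ B − s }`. -/
noncomputable def dgeo {V : Type} [DecidableEq V] (A : Finset (V × V)) :
    Finset V → V → ℕ := fun B s =>
  if h : s ∈ B then
    mex (((B.erase s).filter (fun v => (s, v) ∈ A)).image (fun v => dgeo A (B.erase s) v))
  else 0
termination_by B s => B.card
decreasing_by
  simp_wf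
  exact Finset.card_erase_lt_of_mem h

/-!
The pendant `v₀` gives every original vertex `v` a move of value `0`, so `g(D', v) = 1` exactly
when no move from `v` has value `1`. Entering the gadget of an arc `(x, y)` backwards at `d` has
value `≥ 2`, as `d₀` has value `0` and `f` has value `1`. Entering it forwards at `a`, the values
along `a, b, c, d` are each `mex {0, next}`, the `0` coming from `a₀, f, c₀, d₀` respectively, so
they alternate between `1` and `2`, and `a` has value `1` exactly when `y` has value `1` once the
token reaches it from `d`. What is then left of the gadget is cut off from `y`, so the remaining
board is the reduced graph of the Directed Geography position at `y`, and induction on the number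
of vertices gives `g(D', s) = 1 ↔ g⃗(D, s) = 0`.
-/

section Mex

lemma mex_notMem (S : Finset ℕ) : mex S ∉ S :=
  Nat.sInf_mem (s := {n | n ∉ S}) S.exists_notMem

lemma mex_eq_iff {S : Finset ℕ} {n : ℕ} : mex S = n ↔ n ∉ S ∧ ∀ k < n, k ∈ S := by
  refine ⟨fun h => h ▸ ⟨mex_notMem S, fun k hk => ?_⟩, fun ⟨hn, h⟩ => ?_⟩
  · by_contra hkS
    exact (Nat.sInf_le hkS).not_gt hk
  · exact le_antisymm (Nat.sInf_le hn) (not_lt.1 fun hlt => mex_notMem S (h _ hlt))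

lemma mex_eq_zero_iff {S : Finset ℕ} : mex S = 0 ↔ 0 ∉ S := by
  simp [mex_eq_iff]

lemma mex_eq_one_iff {S : Finset ℕ} (h0 : 0 ∈ S) : mex S = 1 ↔ 1 ∉ S := by
  simp [mex_eq_iff, h0]

lemma two_le_mex {S : Finset ℕ} (h0 : 0 ∈ S) (h1 : 1 ∈ S) : 2 ≤ mex S := by
  by_contra! h
  interval_cases hS : mex S
  · exact mex_notMem S (hS ▸ h0)
  · exact mex_notMem S (hS ▸ h1)

lemma mex_singleton_zero : mex {0} = 1 :=
  (mex_eq_one_iff (Finset.mem_singleton_self 0)).2 (by simp)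

lemma mex_singleton_of_ne_zero {n : ℕ} (hn : n ≠ 0) : mex {n} = 0 :=
  mex_eq_zero_iff.2 (by simpa using hn.symm)

lemma mex_zero_pair (n : ℕ) : mex {0, n} = if n = 1 then 2 else 1 := by
  split_ifs with hn
  · simp only [hn, mex_eq_iff, Finset.mem_insert, Finset.mem_singleton]
    exact ⟨by omega, fun k hk => by omega⟩
  · exact (mex_eq_one_iff (by simp)).2 (by simpa using Ne.symm hn)

end Mex

section Geography

variable {W : Type} [DecidableEq W] (G : SimpleGraph W) [DecidableRel G.Adj]

def moves (X : Finset W) (p : W) : Finset W := (X.erase p).filter (G.Adj p)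

variable {G}

@[simp] lemma mem_moves {X : Finset W} {p q : W} :
    q ∈ moves G X p ↔ q ∈ X ∧ q ≠ p ∧ G.Adj p q := by
  simp [moves, and_assoc, and_left_comm]

lemma geo_of_mem {X : Finset W} {p : W} (hp : p ∈ X) :
    geo G X p = mex ((moves G X p).image (geo G (X.erase p))) := by
  rw [geo, dif_pos hp]
  rfl

lemma geo_eq_zero_of_moves_eq_empty {X : Finset W} {p : W} (h : moves G X p = ∅) :
    geo G X p = 0 := by
  by_cases hp : p ∈ X
  · rw [geo_of_mem hp, h, Finset.image_empty, mex_eq_zero_iff]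
    exact Finset.notMem_empty 0
  · rw [geo, dif_neg hp]

lemma geo_ne_zero {X : Finset W} {p q : W} (hp : p ∈ X) (hq : q ∈ moves G X p)
    (hq0 : geo G (X.erase p) q = 0) : geo G X p ≠ 0 := by
  rw [geo_of_mem hp, Ne, mex_eq_zero_iff, not_not]
  exact Finset.mem_image.2 ⟨q, hq, hq0⟩

lemma geo_eq_one_iff {X : Finset W} {p q : W} (hp : p ∈ X) (hq : q ∈ moves G X p)
    (hq0 : geo G (X.erase p) q = 0) :
    geo G X p = 1 ↔ ∀ r ∈ moves G X p, geo G (X.erase p) r ≠ 1 := by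
  rw [geo_of_mem hp, mex_eq_one_iff (Finset.mem_image.2 ⟨q, hq, hq0⟩)]
  simp

lemma geo_eq_of_subset {R X : Finset W} (hRX : R ⊆ X)
    (hR : ∀ u ∈ R, ∀ v ∈ X, G.Adj u v → v ∈ R) {p : W} (hp : p ∈ R) :
    geo G X p = geo G R p := by
  induction X using Finset.strongInduction generalizing R p with
  | _ X ih =>
  have hmoves : moves G X p = moves G R p := by
    ext q
    simp only [mem_moves]
    exact ⟨fun ⟨hq, hqp, hpq⟩ => ⟨hR p hp q hq hpq, hqp, hpq⟩,
      fun ⟨hq, hqp, hpq⟩ => ⟨hRX hq, hqp, hpq⟩⟩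
  rw [geo_of_mem (hRX hp), geo_of_mem hp, hmoves]
  refine congrArg mex (Finset.image_congr fun q hq => ?_)
  refine ih _ (Finset.erase_ssubset (hRX hp)) (Finset.erase_subset_erase p hRX) ?_ ?_
  · intro u hu v hv huv
    exact Finset.mem_erase.2 ⟨(Finset.mem_erase.1 hv).1,
      hR u (Finset.mem_of_mem_erase hu) v (Finset.mem_of_mem_erase hv) huv⟩
  · have hq := mem_moves.1 (Finset.mem_coe.1 hq)
    exact Finset.mem_erase.2 ⟨hq.2.1, hq.1⟩

end Geography

section Vertices

variable {V : Type}

lemma redV_cases (u : RedV V) :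
    (∃ v, u = orig v) ∨ (∃ v, u = pend v) ∨ ∃ e i, u = gad e i := by
  rcases u with v | v | ⟨e, i⟩
  exacts [Or.inl ⟨v, rfl⟩, Or.inr (Or.inl ⟨v, rfl⟩), Or.inr (Or.inr ⟨e, i, rfl⟩)]

@[simp] lemma orig_inj {v w : V} : orig v = orig w ↔ v = w := by
  simp [orig]

@[simp] lemma gad_inj {e e' : V × V} {i j : Fin 8} : gad e i = gad e' j ↔ e = e' ∧ i = j := by
  simp [gad]

@[simp] lemma pend_ne_orig (v w : V) : pend v ≠ orig w := by
  simp [pend, orig]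

@[simp] lemma gad_ne_orig (e : V × V) (i : Fin 8) (v : V) : gad e i ≠ orig v := by
  simp [gad, orig]

@[simp] lemma orig_ne_gad (v : V) (e : V × V) (i : Fin 8) : orig v ≠ gad e i := by
  simp [gad, orig]

@[simp] lemma pend_ne_gad (v : V) (e : V × V) (i : Fin 8) : pend v ≠ gad e i := by
  simp [gad, pend]

end Vertices

section Reduced

variable {V : Type} [DecidableEq V] {A : Finset (V × V)}

def gadgetNbrs (i : Fin 8) : Finset (Fin 8) :=
  Finset.univ.filter fun j => (i, j) ∈ gadgetPairs ∨ (j, i) ∈ gadgetPairs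

lemma reduced_adj_pend_iff {v : V} {u : RedV V} : (reduced A).Adj (pend v) u ↔ u = orig v := by
  rcases u with w | w | ⟨e, i⟩ <;> simp [reduced, redRel, orig, pend, eq_comm]

lemma reduced_adj_orig_iff {v : V} {u : RedV V} :
    (reduced A).Adj (orig v) u ↔
      u = pend v ∨ ∃ e ∈ A, (e.1 = v ∧ u = gad e 0) ∨ (e.2 = v ∧ u = gad e 5) := by
  rcases u with w | w | ⟨e, i⟩ <;> simp [reduced, redRel, orig, pend, gad, eq_comm]
  constructor
  · rintro ⟨he, ⟨rfl, rfl⟩ | ⟨rfl, rfl⟩⟩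
    exacts [⟨_, _, he, Or.inl ⟨rfl, rfl, rfl⟩⟩, ⟨_, _, he, Or.inr ⟨rfl, rfl, rfl⟩⟩]
  · rintro ⟨a, b, he, ⟨rfl, rfl, rfl⟩ | ⟨rfl, rfl, rfl⟩⟩
    exacts [⟨he, Or.inl ⟨rfl, rfl⟩⟩, ⟨he, Or.inr ⟨rfl, rfl⟩⟩]

lemma reduced_adj_gad_iff {e : V × V} {i : Fin 8} {u : RedV V} :
    (reduced A).Adj (gad e i) u ↔ e ∈ A ∧
      ((i = 0 ∧ u = orig e.1) ∨ (i = 5 ∧ u = orig e.2) ∨ ∃ j ∈ gadgetNbrs i, u = gad e j) := by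
  have hirrefl : ∀ i j : Fin 8, (i, j) ∈ gadgetPairs ∨ (j, i) ∈ gadgetPairs → i ≠ j := by decide
  rcases u with w | w | ⟨e', j⟩ <;> simp [reduced, redRel, orig, gad, gadgetNbrs]
  · tauto
  · have := hirrefl i j
    by_cases h : e' = e <;> aesop

lemma geo_pend_eq_zero {X : Finset (RedV V)} {v : V} (hv : orig v ∉ X) :
    geo (reduced A) X (pend v) = 0 := by
  refine geo_eq_zero_of_moves_eq_empty (Finset.eq_empty_of_forall_notMem fun u hu => ?_)
  rw [mem_moves, reduced_adj_pend_iff] at hu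
  exact hv (hu.2.2 ▸ hu.1)

lemma geo_orig_ne_zero {X : Finset (RedV V)} {v : V} (hv : orig v ∈ X) (hp : pend v ∈ X) :
    geo (reduced A) X (orig v) ≠ 0 :=
  geo_ne_zero hv (by simp [hp, reduced_adj_orig_iff]) (geo_pend_eq_zero (Finset.notMem_erase _ _))

end Reduced

section Gadget

variable {V : Type} [DecidableEq V] {A : Finset (V × V)}

/- Sets `U` of erased gadget indices are written most recent first, e.g. `{5, 3, 2, 0}` after the
play `a, b, c, d`, so that `insert i U` in `geo_gad_eq_mex` is literally the next such set. -/
def eraseGadget (X : Finset (RedV V)) (e : V × V) (U : Finset (Fin 8)) : Finset (RedV V) :=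
  X \ U.image (gad e)

lemma eraseGadget_erase (X : Finset (RedV V)) (e : V × V) (U : Finset (Fin 8)) (i : Fin 8) :
    (eraseGadget X e U).erase (gad e i) = eraseGadget X e (insert i U) := by
  ext u
  simp only [eraseGadget, Finset.mem_erase, Finset.mem_sdiff, Finset.image_insert,
    Finset.mem_insert]
  tauto

@[simp] lemma eraseGadget_empty (X : Finset (RedV V)) (e : V × V) : eraseGadget X e ∅ = X := by
  simp [eraseGadget]

variable {X : Finset (RedV V)} {U : Finset (Fin 8)} {e : V × V} {i : Fin 8}

lemma moves_eraseGadget_gad (he : e ∈ A) (hX : ∀ j, gad e j ∈ X) :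
    moves (reduced A) (eraseGadget X e U) (gad e i) =
      (gadgetNbrs i \ U).image (gad e) ∪
        X.filter fun u => (i = 0 ∧ u = orig e.1) ∨ (i = 5 ∧ u = orig e.2) := by
  have hloop : i ∉ gadgetNbrs i := by revert i; decide
  ext u
  simp only [eraseGadget, mem_moves, reduced_adj_gad_iff, Finset.mem_sdiff, Finset.mem_union,
    Finset.mem_image, Finset.mem_filter]
  constructor
  · rintro ⟨⟨hu, hU⟩, -, -, ⟨rfl, rfl⟩ | ⟨rfl, rfl⟩ | ⟨j, hj, rfl⟩⟩
    · exact Or.inr ⟨hu, Or.inl ⟨rfl, rfl⟩⟩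
    · exact Or.inr ⟨hu, Or.inr ⟨rfl, rfl⟩⟩
    · exact Or.inl ⟨j, ⟨hj, fun hjU => hU ⟨j, hjU, rfl⟩⟩, rfl⟩
  · rintro (⟨j, ⟨hj, hjU⟩, rfl⟩ | ⟨hu, ⟨rfl, rfl⟩ | ⟨rfl, rfl⟩⟩)
    · refine ⟨⟨hX j, ?_⟩, ?_, he, Or.inr (Or.inr ⟨j, hj, rfl⟩)⟩
      · simp only [gad_inj, true_and, not_exists, not_and]
        exact fun k hk hkj => hjU (hkj ▸ hk)
      · simp only [ne_eq, gad_inj, true_and]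
        exact fun hji => hloop (hji ▸ hj)
    · exact ⟨⟨hu, by simp⟩, orig_ne_gad _ _ _, he, Or.inl ⟨rfl, rfl⟩⟩
    · exact ⟨⟨hu, by simp⟩, orig_ne_gad _ _ _, he, Or.inr (Or.inl ⟨rfl, rfl⟩)⟩

lemma geo_gad_eq_mex (he : e ∈ A) (hX : ∀ j, gad e j ∈ X) (hi : i ∉ U := by decide) :
    geo (reduced A) (eraseGadget X e U) (gad e i) =
      mex (((gadgetNbrs i \ U).image (gad e) ∪
        X.filter fun u => (i = 0 ∧ u = orig e.1) ∨ (i = 5 ∧ u = orig e.2)).image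
          (geo (reduced A) (eraseGadget X e (insert i U)))) := by
  rw [geo_of_mem, moves_eraseGadget_gad he hX, eraseGadget_erase]
  simp [eraseGadget, hX, hi]

lemma geo_gad_eq_zero (he : e ∈ A) (hX : ∀ j, gad e j ∈ X) (hi : i ∉ U := by decide)
    (h0 : i ≠ 0 := by decide) (h5 : i ≠ 5 := by decide)
    (hU : gadgetNbrs i ⊆ U := by decide) :
    geo (reduced A) (eraseGadget X e U) (gad e i) = 0 := by
  rw [geo_gad_eq_mex he hX hi, Finset.sdiff_eq_empty_iff_subset.2 hU]
  simp [h0, h5, mex_eq_zero_iff]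

lemma geo_enter_gadget_forward (he : e ∈ A) (hX : ∀ j, gad e j ∈ X) (h1 : orig e.1 ∉ X) :
    geo (reduced A) X (gad e 0) =
      if orig e.2 ∈ X ∧ geo (reduced A) (eraseGadget X e {5, 3, 2, 0}) (orig e.2) = 1
      then 1 else 2 := by
  set W := orig e.2 ∈ X ∧ geo (reduced A) (eraseGadget X e {5, 3, 2, 0}) (orig e.2) = 1
  have hd : geo (reduced A) (eraseGadget X e {3, 2, 0}) (gad e 5) = if W then 2 else 1 := by
    have hd₀ := geo_gad_eq_zero (U := {5, 3, 2, 0}) (i := 6) he hX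
    have hf := geo_gad_eq_zero (U := {5, 3, 2, 0}) (i := 7) he hX
    rw [geo_gad_eq_mex he hX, show gadgetNbrs 5 \ {3, 2, 0} = {6, 7} by decide]
    by_cases h2 : orig e.2 ∈ X
    · simp [Finset.filter_eq', h2, hd₀, hf, W, mex_zero_pair]
    · simp [Finset.filter_eq', h2, hd₀, hf, W, mex_singleton_zero]
  have hc : geo (reduced A) (eraseGadget X e {2, 0}) (gad e 3) = if W then 1 else 2 := by
    have hc₀ := geo_gad_eq_zero (U := {3, 2, 0}) (i := 4) he hX
    rw [geo_gad_eq_mex he hX, show gadgetNbrs 3 \ {2, 0} = {4, 5} by decide]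
    simp [hc₀, hd, mex_zero_pair]
  have hf : geo (reduced A) (eraseGadget X e {2, 0}) (gad e 7) = 0 := by
    have hd : geo (reduced A) (eraseGadget X e {7, 2, 0}) (gad e 5) ≠ 0 := by
      have hd₀ := geo_gad_eq_zero (U := {5, 7, 2, 0}) (i := 6) he hX
      rw [geo_gad_eq_mex he hX, show gadgetNbrs 5 \ {7, 2, 0} = {3, 6} by decide, Ne,
        mex_eq_zero_iff]
      simp [hd₀]
    rw [geo_gad_eq_mex he hX, show gadgetNbrs 7 \ {2, 0} = {5} by decide]
    simp [mex_singleton_of_ne_zero hd]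
  have hb : geo (reduced A) (eraseGadget X e {0}) (gad e 2) = if W then 2 else 1 := by
    rw [geo_gad_eq_mex he hX, show gadgetNbrs 2 \ {0} = {3, 7} by decide]
    simp [hc, hf, Finset.pair_comm _ 0, mex_zero_pair]
  have ha₀ := geo_gad_eq_zero (U := {0}) (i := 1) he hX
  conv_lhs => rw [← eraseGadget_empty X e]
  rw [geo_gad_eq_mex he hX, show gadgetNbrs 0 \ ∅ = {1, 2} by decide]
  simp [Finset.filter_eq', h1, ha₀, hb, mex_zero_pair]
  split_ifs <;> simp

lemma two_le_geo_enter_gadget_backward (he : e ∈ A) (hX : ∀ j, gad e j ∈ X) :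
    2 ≤ geo (reduced A) X (gad e 5) := by
  have hc : geo (reduced A) (eraseGadget X e {2, 7, 5}) (gad e 3) = 1 := by
    have hc₀ := geo_gad_eq_zero (U := {3, 2, 7, 5}) (i := 4) he hX
    rw [geo_gad_eq_mex he hX, show gadgetNbrs 3 \ {2, 7, 5} = {4} by decide]
    simp [hc₀, mex_singleton_zero]
  have ha : geo (reduced A) (eraseGadget X e {2, 7, 5}) (gad e 0) ≠ 0 := by
    have ha₀ := geo_gad_eq_zero (U := {0, 2, 7, 5}) (i := 1) he hX
    rw [geo_gad_eq_mex he hX, show gadgetNbrs 0 \ {2, 7, 5} = {1} by decide, Ne,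
      mex_eq_zero_iff]
    simp [ha₀]
  have hb : geo (reduced A) (eraseGadget X e {7, 5}) (gad e 2) = 0 := by
    rw [geo_gad_eq_mex he hX, show gadgetNbrs 2 \ {7, 5} = {0, 3} by decide, mex_eq_zero_iff]
    simp [hc, Ne.symm ha]
  have hf : geo (reduced A) (eraseGadget X e {5}) (gad e 7) = 1 := by
    rw [geo_gad_eq_mex he hX, show gadgetNbrs 7 \ {5} = {2} by decide]
    simp [hb, mex_singleton_zero]
  have hd₀ := geo_gad_eq_zero (U := {5}) (i := 6) he hX
  conv_rhs => rw [← eraseGadget_empty X e]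
  rw [geo_gad_eq_mex he hX, show gadgetNbrs 5 \ ∅ = {3, 6, 7} by decide]
  apply two_le_mex <;> simp [hd₀, hf]

end Gadget

section Lift

variable {V : Type} [DecidableEq V] {A : Finset (V × V)}

lemma dgeo_eq_zero_iff {B : Finset V} {s : V} (hs : s ∈ B) :
    dgeo A B s = 0 ↔ ∀ y ∈ B.erase s, (s, y) ∈ A → dgeo A (B.erase s) y ≠ 0 := by
  rw [dgeo, dif_pos hs, mex_eq_zero_iff]
  simp

variable [Fintype V]

/-- The vertex set of `D'` left in the position of Directed Geography on the vertex set `B` in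
which the token has already travelled along the arcs in `E`. -/
def liftPos (B : Finset V) (E : Finset (V × V)) : Finset (RedV V) :=
  B.image orig ∪ B.image pend ∪ (Eᶜ ×ˢ Finset.univ).image fun p => gad p.1 p.2

@[simp] lemma mem_liftPos_orig {B : Finset V} {E : Finset (V × V)} {v : V} :
    orig v ∈ liftPos B E ↔ v ∈ B := by
  simp [liftPos, orig, pend, gad]

@[simp] lemma mem_liftPos_pend {B : Finset V} {E : Finset (V × V)} {v : V} :
    pend v ∈ liftPos B E ↔ v ∈ B := by
  simp [liftPos, orig, pend, gad]

@[simp] lemma mem_liftPos_gad {B : Finset V} {E : Finset (V × V)} {e : V × V} {i : Fin 8} :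
    gad e i ∈ liftPos B E ↔ e ∉ E := by
  simp [liftPos, orig, pend, gad]

lemma liftPos_univ_empty : liftPos (Finset.univ : Finset V) ∅ = Finset.univ := by
  ext u
  rcases redV_cases u with ⟨v, rfl⟩ | ⟨v, rfl⟩ | ⟨e, i, rfl⟩ <;> simp

lemma geo_orig_after_traversal (B : Finset V) (E : Finset (V × V)) (s : V) (e : V × V) {y : V}
    (hy : y ∈ B.erase s) :
    geo (reduced A) (eraseGadget ((liftPos B E).erase (orig s)) e {5, 3, 2, 0}) (orig y) =
      geo (reduced A) (liftPos (B.erase s) (insert e E)) (orig y) := by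
  refine geo_eq_of_subset (fun u hu => ?_) (fun u hu v hv huv => ?_) (by simpa using hy)
  · rcases redV_cases u with ⟨w, rfl⟩ | ⟨w, rfl⟩ | ⟨e', j, rfl⟩ <;>
      simp [eraseGadget] at hu ⊢ <;> tauto
  · rw [SimpleGraph.adj_comm] at huv
    rcases redV_cases v with ⟨w, rfl⟩ | ⟨w, rfl⟩ | ⟨e', j, rfl⟩
    · simp [eraseGadget] at hv ⊢
      tauto
    · rw [reduced_adj_pend_iff] at huv
      simpa [huv] using hu
    · simp only [eraseGadget, Finset.mem_sdiff, Finset.mem_erase, mem_liftPos_gad] at hv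
      rw [mem_liftPos_gad, Finset.mem_insert, not_or]
      refine ⟨fun he' => ?_, hv.1.2⟩
      subst he'
      rcases (reduced_adj_gad_iff.1 huv).2 with ⟨rfl, -⟩ | ⟨rfl, -⟩ | ⟨k, -, rfl⟩
      · exact hv.2 (by simp)
      · exact hv.2 (by simp)
      · simp at hu

lemma geo_liftPos_gad_eq_one_iff {B : Finset V} {E : Finset (V × V)} {s : V} {e : V × V}
    (he : e ∈ A) (he1 : e.1 = s) (heE : e ∉ E) :
    geo (reduced A) ((liftPos B E).erase (orig s)) (gad e 0) = 1 ↔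
      e.2 ∈ B.erase s ∧ geo (reduced A) (liftPos (B.erase s) (insert e E)) (orig e.2) = 1 := by
  rw [geo_enter_gadget_forward he (fun j => by simp [heE]) (by simp [he1])]
  by_cases hy : e.2 ∈ B.erase s
  · rw [geo_orig_after_traversal B E s e hy]
    simp [Finset.mem_erase.1 hy]
  · rw [if_neg fun h => hy (by simpa using h.1)]
    simp [hy]

lemma geo_liftPos_eq_one_iff (B : Finset V) (E : Finset (V × V)) (hE : ∀ e ∈ E, e.1 ∉ B)
    {s : V} (hs : s ∈ B) :
    geo (reduced A) (liftPos B E) (orig s) = 1 ↔ dgeo A B s = 0 := by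
  induction B using Finset.strongInduction generalizing E s with
  | _ B ih =>
  have hforward : ∀ e ∈ A, e.1 = s → e ∉ E →
      (geo (reduced A) ((liftPos B E).erase (orig s)) (gad e 0) = 1 ↔
        e.2 ∈ B.erase s ∧ dgeo A (B.erase s) e.2 = 0) := by
    intro e he he1 heE
    rw [geo_liftPos_gad_eq_one_iff he he1 heE]
    refine and_congr_right fun hy => ih _ (Finset.erase_ssubset hs) _ ?_ hy
    simp only [Finset.mem_insert, forall_eq_or_imp, he1, Finset.notMem_erase, not_false_eq_true,
      true_and]
    exact fun e' he' h => hE e' he' (Finset.mem_of_mem_erase h)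
  have hpend : pend s ∈ moves (reduced A) (liftPos B E) (orig s) := by
    simp [hs, reduced_adj_orig_iff]
  rw [geo_eq_one_iff (by simpa) hpend (geo_pend_eq_zero (Finset.notMem_erase _ _)),
    dgeo_eq_zero_iff hs]
  constructor
  · intro h y hy hsy hy0
    have hE' : (s, y) ∉ E := fun h => hE _ h hs
    refine h (gad (s, y) 0) ?_ ((hforward (s, y) hsy rfl hE').2 ⟨hy, hy0⟩)
    simp only [mem_moves, reduced_adj_orig_iff, mem_liftPos_gad]
    exact ⟨hE', gad_ne_orig _ _ _, Or.inr ⟨(s, y), hsy, Or.inl ⟨rfl, rfl⟩⟩⟩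
  · intro h q hq hq1
    rw [mem_moves, reduced_adj_orig_iff] at hq
    obtain ⟨hqX, -, rfl | ⟨e, he, ⟨he1, rfl⟩ | ⟨-, rfl⟩⟩⟩ := hq
    · rw [geo_pend_eq_zero (Finset.notMem_erase _ _)] at hq1
      exact zero_ne_one hq1
    · obtain ⟨hy, hy0⟩ := (hforward e he he1 (by simpa using hqX)).1 hq1
      exact h e.2 hy (he1 ▸ he) hy0
    · have := two_le_geo_enter_gadget_backward he (X := (liftPos B E).erase (orig s))
        (fun j => by simpa using hqX)
      omega

end Lift

/-- for a finite digraph `D` with arc set `A` and vertex `s`, and reduced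
undirected graph `D'`: if `(D,s)` is a P-position of Directed Geography (`g⃗(D,s) = 0`)
then `g(D',s) = 1`; if `(D,s)` is an N-position (`g⃗(D,s) ≠ 0`) then `g(D',s) ≥ 2`.
In particular `g(D',s) = 1 ↔ g⃗(D,s) = 0`. -/
theorem stmt8 {V : Type} [Fintype V] [DecidableEq V] (A : Finset (V × V)) (s : V) :
    (dgeo A Finset.univ s = 0 → geo (reduced A) Finset.univ (orig s) = 1) ∧
    (dgeo A Finset.univ s ≠ 0 → 2 ≤ geo (reduced A) Finset.univ (orig s)) ∧
    (geo (reduced A) Finset.univ (orig s) = 1 ↔ dgeo A Finset.univ s = 0) := by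
  have hP := geo_liftPos_eq_one_iff (A := A) Finset.univ ∅ (by simp) (Finset.mem_univ s)
  rw [liftPos_univ_empty] at hP
  have hne : geo (reduced A) Finset.univ (orig s) ≠ 0 :=
    geo_orig_ne_zero (Finset.mem_univ _) (Finset.mem_univ _)
  refine ⟨hP.2, fun hN => ?_, hP⟩
  have := mt hP.1 hN
  omega
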